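/- The shift map σ on the full shift {0,1}^ℕ has mean ergodic shadowing. -/

import Mathlib

open Filter Metric

noncomputable def cnt (E : Set ℕ) (n : ℕ) : ℝ :=
  ∑ i ∈ Finset.range n, Set.indicator E (fun _ => (1 : ℝ)) i

def DensityZero (E : Set ℕ) : Prop :=
  Filter.Tendsto (fun n : ℕ => cnt E n / n) Filter.atTop (nhds 0)

noncomputable def upperDensity (E : Set ℕ) : ℝ :=
  Filter.limsup (fun n : ℕ => cnt E n / n) Filter.atTop

noncomputable def lowerDensity (E : Set ℕ) : ℝ :=
  Filter.liminf (fun n : ℕ => cnt E n / n) Filter.atTop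

variable {X : Type*}

def ErgodicPseudoOrbit [MetricSpace X] (f : X → X) (δ : ℝ) (ξ : ℕ → X) : Prop :=
  DensityZero {i | δ ≤ dist (f (ξ i)) (ξ (i + 1))}

def AvgShadows [MetricSpace X] (f : X → X) (ε : ℝ) (p : X) (ξ : ℕ → X) : Prop :=
  Filter.limsup (fun n : ℕ => (∑ i ∈ Finset.range n, dist (f^[i] p) (ξ i)) / n) Filter.atTop < ε

def MeanErgodicShadowingAvg [MetricSpace X] (f : X → X) : Prop :=
  ∀ ε > 0, ∃ δ > 0, ∀ ξ : ℕ → X, ErgodicPseudoOrbit f δ ξ → ∃ p : X, AvgShadows f ε p ξ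

def MeanErgodicShadowingDens [MetricSpace X] (f : X → X) : Prop :=
  ∀ ε > 0, ∃ δ > 0, ∀ ξ : ℕ → X, ErgodicPseudoOrbit f δ ξ →
    ∃ p : X, upperDensity {i | ε ≤ dist (f^[i] p) (ξ i)} < ε

def Shadowing [MetricSpace X] (f : X → X) : Prop :=
  ∀ ε > 0, ∃ δ > 0, ∀ ξ : ℕ → X, (∀ i, dist (f (ξ i)) (ξ (i + 1)) < δ) →
    ∃ p : X, ∀ i, dist (f^[i] p) (ξ i) < ε

attribute [local instance] PiNat.metricSpace

/-- The shift map on the full shift `{0,1}^ℕ`. -/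
def shiftMap : (ℕ → Bool) → (ℕ → Bool) := fun x n => x (n + 1)

/-!
Shadow a pseudo orbit `ξ` by the point `p` whose `n`-th symbol is the `0`-th symbol of `ξ n`.
A jump `dist (σ (ξ i)) (ξ (i + 1)) < 2⁻ᴺ` means that `ξ (i + 1)` continues `σ (ξ i)` on its first
`N + 1` symbols, so `σⁱ p` is `2⁻⁽ᴺ⁺¹⁾`-close to `ξ i` unless one of the `N` jumps at
`i, …, i + N - 1` is large. The times where shadowing fails thus lie in a union of `N` translates of
the density-zero set of large jumps, and so have density zero.
-/

section Counting

open Finset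

lemma cnt_nonneg (E : Set ℕ) (n : ℕ) : 0 ≤ cnt E n :=
  sum_nonneg fun i _ => Set.indicator_nonneg (fun _ _ => zero_le_one) i

lemma cnt_mono {E F : Set ℕ} (h : E ⊆ F) (n : ℕ) : cnt E n ≤ cnt F n :=
  sum_le_sum fun i _ => Set.indicator_le_indicator_of_subset h (fun _ => zero_le_one) i

lemma cnt_union_le (E F : Set ℕ) (n : ℕ) : cnt (E ∪ F) n ≤ cnt E n + cnt F n := by
  rw [cnt, cnt, cnt, ← sum_add_distrib]
  refine sum_le_sum fun i _ => ?_
  rw [← Pi.add_apply (Set.indicator E _), ← Set.indicator_union_add_inter, Pi.add_apply]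
  exact le_add_of_nonneg_right (Set.indicator_nonneg (fun _ _ => zero_le_one) i)

lemma cnt_add_le (E : Set ℕ) (n k : ℕ) : cnt E (n + k) ≤ cnt E n + k := by
  rw [cnt, cnt, sum_range_add]
  gcongr
  simpa using sum_le_card_nsmul (range k) (fun i => E.indicator (fun _ => (1 : ℝ)) (n + i)) 1
    fun i _ => Set.indicator_le_self' (fun _ _ => zero_le_one) (n + i)

lemma cnt_preimage_add_le (E : Set ℕ) (k n : ℕ) : cnt ((k + ·) ⁻¹' E) n ≤ cnt E (k + n) := by
  unfold cnt
  rw [sum_range_add]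
  refine le_add_of_nonneg_of_le (cnt_nonneg E k) (sum_le_sum fun i _ => ?_)
  exact (Set.indicator_comp_right (k + ·) (g := fun _ => (1 : ℝ))).le

end Counting

namespace DensityZero

lemma of_le {E : Set ℕ} {u : ℕ → ℝ} (hu : Tendsto u atTop (nhds 0))
    (h : ∀ n, cnt E n / n ≤ u n) : DensityZero E :=
  tendsto_of_tendsto_of_tendsto_of_le_of_le tendsto_const_nhds hu
    (fun n => div_nonneg (cnt_nonneg E n) n.cast_nonneg) h

lemma empty : DensityZero ∅ := by
  simp [DensityZero, cnt]

lemma mono {E F : Set ℕ} (hF : DensityZero F) (h : E ⊆ F) : DensityZero E :=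
  of_le hF fun n => div_le_div_of_nonneg_right (cnt_mono h n) n.cast_nonneg

lemma union {E F : Set ℕ} (hE : DensityZero E) (hF : DensityZero F) : DensityZero (E ∪ F) :=
  of_le (by simpa using hE.add hF) fun n => by
    rw [← add_div]
    exact div_le_div_of_nonneg_right (cnt_union_le E F n) n.cast_nonneg

lemma preimage_add {E : Set ℕ} (hE : DensityZero E) (k : ℕ) : DensityZero ((k + ·) ⁻¹' E) := by
  have hk : Tendsto (fun n : ℕ => (k : ℝ) / n) atTop (nhds 0) :=
    tendsto_const_div_atTop_nhds_zero_nat (k : ℝ)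
  refine of_le (by simpa using hE.add hk) fun n => ?_
  rw [← add_div]
  refine div_le_div_of_nonneg_right ?_ n.cast_nonneg
  calc cnt ((k + ·) ⁻¹' E) n ≤ cnt E (k + n) := cnt_preimage_add_le E k n
    _ ≤ cnt E n + k := add_comm k n ▸ cnt_add_le E n k

lemma biUnion_finset {ι : Type*} {s : Finset ι} {E : ι → Set ℕ}
    (h : ∀ k ∈ s, DensityZero (E k)) : DensityZero (⋃ k ∈ s, E k) := by
  classical
  induction s using Finset.induction_on with
  | empty => simpa using empty
  | insert a s _ ih =>
    rw [Finset.set_biUnion_insert]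
    exact (h a (s.mem_insert_self a)).union (ih fun k hk => h k (s.mem_insert_of_mem hk))

end DensityZero

lemma shiftMap_iterate_apply (i : ℕ) (x : ℕ → Bool) (n : ℕ) : shiftMap^[i] x n = x (n + i) := by
  induction i generalizing x with
  | zero => rfl
  | succ i ih =>
    rw [Function.iterate_succ_apply, ih]
    exact congrArg x (add_assoc n i 1)

lemma apply_eq_apply_zero_of_dist_shiftMap_lt {ξ : ℕ → ℕ → Bool} {N i j : ℕ} (hj : j ≤ N)
    (h : ∀ k < j, dist (shiftMap (ξ (i + k))) (ξ (i + k + 1)) < (1 / 2) ^ N) :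
    ξ i j = ξ (i + j) 0 := by
  induction j generalizing i with
  | zero => rfl
  | succ j ih =>
    have hstep : ξ i (j + 1) = ξ (i + 1) j :=
      PiNat.apply_eq_of_dist_lt (h 0 j.succ_pos) (i := j) (by omega)
    have htail : ∀ k < j, dist (shiftMap (ξ (i + 1 + k))) (ξ (i + 1 + k + 1)) < (1 / 2) ^ N :=
      fun k hk => by simpa [add_assoc, add_comm 1] using h (k + 1) (by omega)
    rw [hstep, ih (by omega) htail, add_right_comm, add_assoc]

lemma dist_iterate_shiftMap_le {ξ : ℕ → ℕ → Bool} {N i : ℕ}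
    (h : ∀ k < N, dist (shiftMap (ξ (i + k))) (ξ (i + k + 1)) < (1 / 2) ^ N) :
    dist (shiftMap^[i] fun n => ξ n 0) (ξ i) ≤ (1 / 2) ^ (N + 1) := by
  refine PiNat.mem_cylinder_iff_dist_le.1 (PiNat.mem_cylinder_iff.2 fun j hj => ?_)
  rw [shiftMap_iterate_apply, add_comm]
  exact (apply_eq_apply_zero_of_dist_shiftMap_lt (j := j) (by omega) fun k hk => h k (by omega)).symm

theorem stmt19 : MeanErgodicShadowingDens shiftMap := by
  intro ε hε
  obtain ⟨N, hN⟩ : ∃ N : ℕ, (1 / 2 : ℝ) ^ (N + 1) < ε :=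
    ((tendsto_pow_atTop_nhds_zero_of_lt_one (by norm_num) (by norm_num)).comp
      (tendsto_add_atTop_nat 1)).eventually (gt_mem_nhds hε) |>.exists
  refine ⟨(1 / 2) ^ N, by positivity, fun ξ hξ => ⟨fun n => ξ n 0, ?_⟩⟩
  set E := {i | (1 / 2 : ℝ) ^ N ≤ dist (shiftMap (ξ i)) (ξ (i + 1))}
  have hbad : {i | ε ≤ dist (shiftMap^[i] fun n => ξ n 0) (ξ i)} ⊆
      ⋃ k ∈ Finset.range N, (k + ·) ⁻¹' E := by
    intro i hi
    by_contra hgood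
    simp only [Set.mem_iUnion, Set.mem_preimage, Finset.mem_range, not_exists] at hgood
    refine (hN.trans_le hi).not_ge (dist_iterate_shiftMap_le fun k hk => ?_)
    simpa [E, add_comm k i] using hgood k hk
  have hzero : DensityZero {i | ε ≤ dist (shiftMap^[i] fun n => ξ n 0) (ξ i)} :=
    (DensityZero.biUnion_finset fun k _ => DensityZero.preimage_add hξ k).mono hbad
  rw [upperDensity, hzero.limsup_eq]
  exact hε
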